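/- arXiv:1606.00553 — 4 statements merged into one kernel-verified Lean document; each statement's English description precedes it below -/
import Mathlib

section
/- For every j ≥ 0: max( ‖(I − R) e_j‖ , ‖(R⁻¹ − I)* e_j‖ ) ≤ ‖(R⁻¹ − R*)* e_j‖ ≤ √(ε_j) · ‖C‖ / √(1 − ‖C‖²). (Here ‖(I − R) e_j‖, ‖(R⁻¹ − I)* e_j‖ and ‖(R⁻¹ − R*)* e_j‖ are the ℓ²-norms of the j-th rows of I − R*, R⁻¹ − I and R⁻¹ − R*, respectively.) -/
/-!
From `R*R = 1 - C*C` and `R R⁻¹ = 1` one gets `R⁻¹ - R* = C*C R⁻¹`, so the `j`-th row of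
`R⁻¹ - R*` is `(R⁻¹)* C* (C e_j)`, of norm at most `‖R⁻¹‖ ‖C‖ ‖C e_j‖`; and
`‖R x‖² = ‖x‖² - ‖C x‖² ≥ (1 - ‖C‖²) ‖x‖²` gives `‖R⁻¹‖ ≤ (1 - ‖C‖²)^(-1/2)`.

For the lower bound, the inverse of an upper triangular operator with nonzero diagonal is
upper triangular with the reciprocal diagonal. Hence the row `(R⁻¹ - R*)* e_j` is the sum of
`(1 - R) e_j`, supported on coordinates `≤ j`, and `(R⁻¹ - 1)* e_j`, supported on coordinates
`≥ j`. Their only common coordinate carries `1 - s` and `s⁻¹ - 1 = (1 - s) / s`, where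
`s = R_{jj} > 0`; these have the same sign, so each summand is dominated coordinatewise by the sum.
-/

open ContinuousLinearMap Finset
open scoped lp ComplexOrder ComplexConjugate ENNReal InnerProductSpace

theorem abs_le_abs_add_of_mul_nonneg {a b : ℝ} (h : 0 ≤ a * b) : |a| ≤ |a + b| :=
  sq_le_sq.mp (by nlinarith [sq_nonneg b])

namespace lp

section

variable {α : Type*} {E : α → Type*} [∀ i, NormedAddCommGroup (E i)] {p : ℝ≥0∞}

theorem eq_sum_single_of_forall_notMem [DecidableEq α] (f : lp E p) {s : Finset α}
    (hf : ∀ i ∉ s, f i = 0) : f = ∑ i ∈ s, lp.single p i (f i) := by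
  ext i
  rw [coeFn_sum, Finset.sum_apply]
  simp only [lp.coeFn_single, Finset.sum_pi_single]
  split_ifs with hi
  · rfl
  · exact hf i hi

theorem norm_le_norm_add_of_forall_ne (hp : p ≠ 0) {x y : lp E p} (j : α)
    (hxy : ∀ k ≠ j, x k = 0 ∨ y k = 0) (hj : ‖x j‖ ≤ ‖x j + y j‖) : ‖x‖ ≤ ‖x + y‖ := by
  refine lp.norm_mono hp fun k => ?_
  rw [coeFn_add, Pi.add_apply]
  rcases eq_or_ne k j with rfl | hk
  · exact hj
  rcases hxy k hk with h | h <;> simp [h]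

end

section

variable {𝕜 ι : Type*} [RCLike 𝕜] [DecidableEq ι]

theorem inner_single_one_left (f : ℓ²(ι, 𝕜)) (j : ι) : ⟪lp.single 2 j (1 : 𝕜), f⟫_𝕜 = f j := by
  simp [lp.inner_single_left]

theorem single_smul_one (i : ι) (c : 𝕜) : c • (lp.single 2 i 1 : ℓ²(ι, 𝕜)) = lp.single 2 i c := by
  rw [← lp.single_smul, smul_eq_mul, mul_one]

theorem adjoint_apply_single_apply (A : ℓ²(ι, 𝕜) →L[𝕜] ℓ²(ι, 𝕜)) (j k : ι) :
    adjoint A (lp.single 2 j 1) k = conj (A (lp.single 2 k 1) j) := by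
  rw [← inner_single_one_left, adjoint_inner_right, ← inner_conj_symm, inner_single_one_left]

end

end lp

section UpperTriangular

variable {𝕜 : Type*} [RCLike 𝕜]

def IsUpperTriangular (A : ℓ²(ℕ, 𝕜) →L[𝕜] ℓ²(ℕ, 𝕜)) : Prop :=
  ∀ ⦃j k : ℕ⦄, k < j → A (lp.single 2 k 1) j = 0

theorem comp_apply_single_apply_of_isUpperTriangular (A : ℓ²(ℕ, 𝕜) →L[𝕜] ℓ²(ℕ, 𝕜))
    {B : ℓ²(ℕ, 𝕜) →L[𝕜] ℓ²(ℕ, 𝕜)} (hB : IsUpperTriangular B) (j k : ℕ) :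
    (A ∘L B) (lp.single 2 k 1) j
      = ∑ m ∈ range (k + 1), B (lp.single 2 k 1) m * A (lp.single 2 m 1) j := by
  have hsupp : ∀ m ∉ range (k + 1), B (lp.single 2 k 1) m = 0 := fun m hm =>
    hB (by simpa using hm)
  conv_lhs => rw [comp_apply, lp.eq_sum_single_of_forall_notMem _ hsupp, map_sum, lp.coeFn_sum,
    Finset.sum_apply]
  refine Finset.sum_congr rfl fun m _ => ?_
  rw [← lp.single_smul_one, map_smul, lp.coeFn_smul, Pi.smul_apply, smul_eq_mul]

namespace IsUpperTriangular

variable {R Q : ℓ²(ℕ, 𝕜) →L[𝕜] ℓ²(ℕ, 𝕜)}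

theorem of_comp_eq_one (hR : IsUpperTriangular R) (hdiag : ∀ n, R (lp.single 2 n 1) n ≠ 0)
    (hQR : Q ∘L R = 1) : IsUpperTriangular Q := by
  intro p k
  induction k using Nat.strong_induction_on with
  | _ k ih =>
    intro hkp
    have h := comp_apply_single_apply_of_isUpperTriangular Q hR p k
    rw [hQR, one_apply_eq_self, lp.single_apply_ne _ _ _ hkp.ne', Finset.sum_range_succ,
      Finset.sum_eq_zero fun m hm => ?_, zero_add] at h
    · exact (mul_eq_zero.mp h.symm).resolve_left (hdiag k)
    · have hmk := Finset.mem_range.mp hm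
      rw [ih m hmk (hmk.trans hkp), mul_zero]

theorem apply_single_mul_apply_single_of_comp_eq_one (hR : IsUpperTriangular R)
    (hdiag : ∀ n, R (lp.single 2 n 1) n ≠ 0) (hQR : Q ∘L R = 1) (n : ℕ) :
    R (lp.single 2 n 1) n * Q (lp.single 2 n 1) n = 1 := by
  have hQ := hR.of_comp_eq_one hdiag hQR
  have h := comp_apply_single_apply_of_isUpperTriangular Q hR n n
  rw [hQR, one_apply_eq_self, lp.single_apply_self, Finset.sum_range_succ,
    Finset.sum_eq_zero fun m hm => by rw [hQ (Finset.mem_range.mp hm), mul_zero], zero_add] at h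
  exact h.symm

theorem one_sub {A : ℓ²(ℕ, 𝕜) →L[𝕜] ℓ²(ℕ, 𝕜)} (hA : IsUpperTriangular A) :
    IsUpperTriangular (1 - A) := fun j k hkj => by
  rw [sub_apply, one_apply_eq_self, lp.coeFn_sub, Pi.sub_apply, hA hkj,
    lp.single_apply_ne _ _ _ hkj.ne', sub_zero]

theorem sub_one {A : ℓ²(ℕ, 𝕜) →L[𝕜] ℓ²(ℕ, 𝕜)} (hA : IsUpperTriangular A) :
    IsUpperTriangular (A - 1) := fun j k hkj => by
  rw [← neg_sub, neg_apply, lp.coeFn_neg, Pi.neg_apply, hA.one_sub hkj, neg_zero]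

theorem adjoint_apply_single_apply_of_lt {A : ℓ²(ℕ, 𝕜) →L[𝕜] ℓ²(ℕ, 𝕜)}
    (hA : IsUpperTriangular A) {j k : ℕ} (hkj : k < j) : adjoint A (lp.single 2 j 1) k = 0 := by
  rw [lp.adjoint_apply_single_apply, hA hkj, map_zero]

end IsUpperTriangular

theorem max_norm_le_norm_adjoint_sub_adjoint_apply_single {R Q : ℓ²(ℕ, 𝕜) →L[𝕜] ℓ²(ℕ, 𝕜)}
    (hR : IsUpperTriangular R) (hdiag : ∀ n, 0 < R (lp.single 2 n 1) n) (hQR : Q ∘L R = 1)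
    (j : ℕ) :
    max ‖(1 - R) (lp.single 2 j 1)‖ ‖adjoint (Q - 1) (lp.single 2 j 1)‖
      ≤ ‖adjoint (Q - adjoint R) (lp.single 2 j 1)‖ := by
  have hdiag_ne : ∀ n, R (lp.single 2 n 1) n ≠ 0 := fun n => (hdiag n).ne'
  have hQ := hR.of_comp_eq_one hdiag_ne hQR
  obtain ⟨s, hs, hsR⟩ := RCLike.pos_iff_exists_ofReal.mp (hdiag j)
  have hsQ : Q (lp.single 2 j 1) j = ((s⁻¹ : ℝ) : 𝕜) := by
    have h := hR.apply_single_mul_apply_single_of_comp_eq_one hdiag_ne hQR j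
    rw [← hsR] at h
    rw [RCLike.ofReal_inv, eq_inv_of_mul_eq_one_right h]
  set x := (1 - R) (lp.single 2 j 1) with hx
  set y := adjoint (Q - 1) (lp.single 2 j 1) with hy
  have hsplit : adjoint (Q - adjoint R) (lp.single 2 j 1) = x + y := by
    simp only [hx, hy, map_sub, adjoint_adjoint, adjoint_one, sub_apply, one_apply_eq_self]
    abel
  have hxy : ∀ k ≠ j, x k = 0 ∨ y k = 0 := fun k hk => (hk.lt_or_gt.imp
    hQ.sub_one.adjoint_apply_single_apply_of_lt fun hjk => hR.one_sub hjk).symm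
  have hxj : x j = ((1 - s : ℝ) : 𝕜) := by
    rw [hx, sub_apply, one_apply_eq_self, lp.coeFn_sub, Pi.sub_apply, lp.single_apply_self, ← hsR,
      RCLike.ofReal_sub, RCLike.ofReal_one]
  have hyj : y j = ((s⁻¹ - 1 : ℝ) : 𝕜) := by
    rw [hy, lp.adjoint_apply_single_apply, sub_apply, one_apply_eq_self, lp.coeFn_sub, Pi.sub_apply,
      hsQ, lp.single_apply_self, ← RCLike.ofReal_one, ← RCLike.ofReal_sub, RCLike.conj_ofReal]
  have hsign : 0 ≤ (1 - s) * (s⁻¹ - 1) := by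
    rw [show (1 - s) * (s⁻¹ - 1) = (1 - s) ^ 2 / s by field_simp]
    positivity
  rw [hsplit]
  refine max_le (lp.norm_le_norm_add_of_forall_ne two_ne_zero j hxy ?_)
    (add_comm x y ▸ lp.norm_le_norm_add_of_forall_ne two_ne_zero j
      (fun k hk => (hxy k hk).symm) ?_)
  · rw [hxj, hyj, ← RCLike.ofReal_add, RCLike.norm_ofReal, RCLike.norm_ofReal]
    exact abs_le_abs_add_of_mul_nonneg hsign
  · rw [hxj, hyj, ← RCLike.ofReal_add, RCLike.norm_ofReal, RCLike.norm_ofReal]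
    exact abs_le_abs_add_of_mul_nonneg (by rwa [mul_comm])

end UpperTriangular

section ContractiveDefect

variable {𝕜 E F : Type*} [RCLike 𝕜] [NormedAddCommGroup E] [InnerProductSpace 𝕜 E]
  [CompleteSpace E] [NormedAddCommGroup F] [InnerProductSpace 𝕜 F] [CompleteSpace F]
  {R Q : E →L[𝕜] E} {C : E →L[𝕜] F}

theorem norm_sq_apply_eq_sub_of_adjoint_comp_self (hRC : adjoint R ∘L R = 1 - adjoint C ∘L C)
    (x : E) : ‖R x‖ ^ 2 = ‖x‖ ^ 2 - ‖C x‖ ^ 2 := by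
  have h := congrArg (fun A : E →L[𝕜] E => RCLike.re ⟪A x, x⟫_𝕜) hRC
  simpa only [comp_apply, adjoint_inner_left, sub_apply, one_apply_eq_self, inner_sub_left,
    map_sub, inner_self_eq_norm_sq] using h

theorem norm_le_inv_sqrt_of_comp_eq_one (hRC : adjoint R ∘L R = 1 - adjoint C ∘L C)
    (hC : ‖C‖ < 1) (hRQ : R ∘L Q = 1) : ‖Q‖ ≤ (√(1 - ‖C‖ ^ 2))⁻¹ := by
  have hpos : 0 < 1 - ‖C‖ ^ 2 := by nlinarith [norm_nonneg C]
  refine opNorm_le_bound Q (by positivity) fun y => ?_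
  have hy : R (Q y) = y := by rw [← comp_apply, hRQ, one_apply_eq_self]
  have hsq : (√(1 - ‖C‖ ^ 2) * ‖Q y‖) ^ 2 ≤ ‖y‖ ^ 2 := by
    conv_rhs => rw [← hy, norm_sq_apply_eq_sub_of_adjoint_comp_self hRC]
    rw [mul_pow, Real.sq_sqrt hpos.le]
    nlinarith [le_opNorm C (Q y), norm_nonneg (C (Q y)), norm_nonneg (Q y)]
  rw [inv_mul_eq_div, le_div_iff₀ (Real.sqrt_pos.mpr hpos), mul_comm]
  exact (pow_le_pow_iff_left₀ (by positivity) (norm_nonneg y) two_ne_zero).mp hsq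

theorem sub_adjoint_eq_of_comp_eq_one (hRC : adjoint R ∘L R = 1 - adjoint C ∘L C)
    (hRQ : R ∘L Q = 1) : Q - adjoint R = adjoint C ∘L C ∘L Q := by
  calc Q - adjoint R = (adjoint R ∘L R + adjoint C ∘L C) ∘L Q - adjoint R ∘L (R ∘L Q) := by
        rw [hRC, sub_add_cancel, hRQ, one_def, id_comp, comp_id]
    _ = adjoint C ∘L C ∘L Q := by rw [add_comp, comp_assoc, add_sub_cancel_left, comp_assoc]

theorem norm_adjoint_sub_adjoint_apply_le (hRC : adjoint R ∘L R = 1 - adjoint C ∘L C)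
    (hC : ‖C‖ < 1) (hRQ : R ∘L Q = 1) (x : E) :
    ‖adjoint (Q - adjoint R) x‖ ≤ ‖C x‖ * ‖C‖ / √(1 - ‖C‖ ^ 2) :=
  calc ‖adjoint (Q - adjoint R) x‖ = ‖adjoint Q (adjoint C (C x))‖ := by
        rw [sub_adjoint_eq_of_comp_eq_one hRC hRQ, adjoint_comp, adjoint_comp, adjoint_adjoint]
        rfl
    _ ≤ ‖Q‖ * (‖C‖ * ‖C x‖) := by
        refine (le_opNorm _ _).trans ?_
        rw [adjoint.norm_map, ← adjoint.norm_map C]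
        gcongr
        exact le_opNorm _ _
    _ ≤ (√(1 - ‖C‖ ^ 2))⁻¹ * (‖C‖ * ‖C x‖) := by
        gcongr
        exact norm_le_inv_sqrt_of_comp_eq_one hRC hC hRQ
    _ = ‖C x‖ * ‖C‖ / √(1 - ‖C‖ ^ 2) := by ring

end ContractiveDefect

/-- Theorem 2.4, row estimates: with `ε_j := ‖C e_j‖²`,
`max(‖(I−R)e_j‖, ‖(R⁻¹−I)* e_j‖) ≤ ‖(R⁻¹−R*)* e_j‖ ≤ √ε_j ‖C‖ / √(1−‖C‖²)`. -/
theorem grunsky_row_bounds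
    (C R Rinv : lp (fun _ : ℕ => ℂ) 2 →L[ℂ] lp (fun _ : ℕ => ℂ) 2)
    (hC : ‖C‖ < 1)
    (hRtri : ∀ j k : ℕ, k < j → (inner ℂ (lp.single 2 j (1:ℂ)) (R (lp.single 2 k (1:ℂ))) : ℂ) = 0)
    (hRdiagRe : ∀ n : ℕ,
      0 < (inner ℂ (lp.single 2 n (1:ℂ)) (R (lp.single 2 n (1:ℂ))) : ℂ).re)
    (hRdiagIm : ∀ n : ℕ,
      (inner ℂ (lp.single 2 n (1:ℂ)) (R (lp.single 2 n (1:ℂ))) : ℂ).im = 0)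
    (hM : adjoint R ∘L R = 1 - adjoint C ∘L C)
    (hRinv : R ∘L Rinv = 1 ∧ Rinv ∘L R = 1)
    (ε : ℕ → ℝ) (hε : ∀ n, ε n = ‖C (lp.single 2 n (1:ℂ))‖^2) :
    ∀ j : ℕ,
      max ‖(1 - R) (lp.single 2 j (1:ℂ))‖ ‖(adjoint (Rinv - 1)) (lp.single 2 j (1:ℂ))‖
          ≤ ‖(adjoint (Rinv - adjoint R)) (lp.single 2 j (1:ℂ))‖ ∧
      ‖(adjoint (Rinv - adjoint R)) (lp.single 2 j (1:ℂ))‖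
          ≤ Real.sqrt (ε j) * ‖C‖ / Real.sqrt (1 - ‖C‖^2) := by
  simp only [lp.inner_single_one_left] at hRtri hRdiagRe hRdiagIm
  have hR : IsUpperTriangular R := hRtri
  have hdiag : ∀ n, 0 < R (lp.single 2 n 1) n := fun n =>
    RCLike.pos_iff.mpr ⟨hRdiagRe n, hRdiagIm n⟩
  intro j
  refine ⟨max_norm_le_norm_adjoint_sub_adjoint_apply_single hR hdiag hRinv.2 j, ?_⟩
  rw [hε, Real.sqrt_sq (norm_nonneg _)]
  exact norm_adjoint_sub_adjoint_apply_le hM hC hRinv.1 _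
end

section
/- If moreover the series ∑_{n=0}^∞ ε_n converges (i.e. C is a Hilbert–Schmidt operator), then ∑_{j=0}^∞ ‖(I − R) e_j‖² < ∞ and ∑_{j=0}^∞ ‖(I − R⁻¹)* e_j‖² < ∞; that is, both I − R and I − R⁻¹ are Hilbert–Schmidt operators. -/
/-!
Put `D = C*C` and `P = R⁻¹ (R⁻¹)* = (1 - D)⁻¹`. From `P = 1 + D + DPD` one gets
`‖(R⁻¹)* e_j‖² = 1 + ε_j + ‖(R⁻¹)* D e_j‖² ≤ 1 + c ε_j` with `c = 1 + ‖R⁻¹‖² ‖C‖²`,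
while `‖R e_j‖² = 1 - ε_j ≤ 1`.
An injective upper triangular operator maps each finite-dimensional space `span(e_0, …, e_k)`
onto itself, so `R⁻¹` is upper triangular with diagonal entries `1 / r_j`, where
`r_j = R_{jj} ∈ (0, 1]`. Expanding the squares, `‖(1 - R) e_j‖²` and `‖(1 - R⁻¹)* e_j‖²` are
both at most `‖(R⁻¹)* e_j‖² - 1 ≤ c ε_j`; for the first this is `2 - 2r ≤ r⁻² - 1`, i.e.
`(1 - r)² (1 + 2r) ≥ 0`.
-/

open ContinuousLinearMap

open scoped InnerProductSpace ComplexOrder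

noncomputable section

namespace HilbertBasis

variable {𝕜 E : Type*} [RCLike 𝕜] [NormedAddCommGroup E] [InnerProductSpace 𝕜 E]
  (b : HilbertBasis ℕ 𝕜 E)

def flag (k : ℕ) : Submodule 𝕜 E := Submodule.span 𝕜 (b '' Set.Iic k)

instance (k : ℕ) : FiniteDimensional 𝕜 (b.flag k) :=
  FiniteDimensional.span_of_finite 𝕜 ((Set.finite_Iic k).image b)

theorem sum_range_inner_smul_eq {k : ℕ} {x : E} (hx : ∀ j, k < j → ⟪b j, x⟫_𝕜 = 0) :
    ∑ i ∈ Finset.range (k + 1), ⟪b i, x⟫_𝕜 • b i = x := by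
  have hsum := b.hasSum_repr x
  simp only [b.repr_apply_apply] at hsum
  refine (hasSum_sum_of_ne_finset_zero fun i hi => ?_).unique hsum
  rw [hx i (by simpa using hi), zero_smul]

theorem mem_flag_iff {k : ℕ} {x : E} : x ∈ b.flag k ↔ ∀ j, k < j → ⟪b j, x⟫_𝕜 = 0 := by
  constructor
  · intro hx j hj
    refine (Submodule.span_le (p := LinearMap.ker (innerₛₗ 𝕜 (b j)))).2 ?_ hx
    rintro _ ⟨i, hi, rfl⟩
    exact b.orthonormal.inner_eq_zero (by simp at hi; omega)
  · intro hx
    rw [← b.sum_range_inner_smul_eq hx]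
    refine Submodule.sum_mem _ fun i hi => Submodule.smul_mem _ _ (Submodule.subset_span ?_)
    exact ⟨i, by simpa [Nat.lt_succ_iff] using hi, rfl⟩

def IsUpperTriangular (T : E →L[𝕜] E) : Prop := ∀ j k, k < j → ⟪b j, T (b k)⟫_𝕜 = 0

variable {b} {S T : E →L[𝕜] E}

theorem IsUpperTriangular.apply_mem_flag (hT : b.IsUpperTriangular T) (k : ℕ) :
    T (b k) ∈ b.flag k :=
  b.mem_flag_iff.2 fun j hj => hT j k hj

theorem IsUpperTriangular.mapsTo_flag (hT : b.IsUpperTriangular T) (k : ℕ) :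
    Set.MapsTo T (b.flag k) (b.flag k) := by
  refine fun x hx => (Submodule.span_le (p := (b.flag k).comap (T : E →ₗ[𝕜] E))).2 ?_ hx
  rintro _ ⟨i, hi, rfl⟩
  exact Submodule.span_mono (Set.image_mono (Set.Iic_subset_Iic.2 hi)) (hT.apply_mem_flag i)

theorem IsUpperTriangular.of_comp_eq_one (hT : b.IsUpperTriangular T) (hST : S ∘L T = 1) :
    b.IsUpperTriangular S := by
  intro j k hjk
  have hST' (x : E) : S (T x) = x := by simpa using congr($hST x)
  let Tk : b.flag k →ₗ[𝕜] b.flag k := (T : E →ₗ[𝕜] E).restrict (hT.mapsTo_flag k)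
  have hTk : Function.Injective Tk := fun x y hxy => Subtype.ext <| by
    have h : S (T x) = S (T y) := congr(S ($hxy : E))
    rwa [hST', hST'] at h
  obtain ⟨v, hv⟩ := LinearMap.injective_iff_surjective.1 hTk
    ⟨b k, Submodule.subset_span ⟨k, Set.mem_Iic.2 le_rfl, rfl⟩⟩
  have hTv : T v = b k := congr(($hv : E))
  rw [← hTv, hST']
  exact (b.mem_flag_iff.1 v.2) j hjk

theorem IsUpperTriangular.inner_comp_apply_self (hS : b.IsUpperTriangular S)
    (hT : b.IsUpperTriangular T) (k : ℕ) :
    ⟪b k, (S ∘L T) (b k)⟫_𝕜 = ⟪b k, S (b k)⟫_𝕜 * ⟪b k, T (b k)⟫_𝕜 := by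
  have hTk := b.sum_range_inner_smul_eq (b.mem_flag_iff.1 (hT.apply_mem_flag k))
  rw [comp_apply]
  conv_lhs => rw [← hTk]
  rw [map_sum, inner_sum, Finset.sum_eq_single k]
  · rw [map_smul, inner_smul_right, mul_comm]
  · intro i hi hik
    rw [map_smul, inner_smul_right, hS k i (by simp at hi; omega), mul_zero]
  · simp

theorem IsUpperTriangular.inner_apply_self_mul_inner_apply_self_eq_one
    (hT : b.IsUpperTriangular T) (hST : S ∘L T = 1) (k : ℕ) :
    ⟪b k, S (b k)⟫_𝕜 * ⟪b k, T (b k)⟫_𝕜 = 1 := by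
  rw [← (hT.of_comp_eq_one hST).inner_comp_apply_self hT, hST, one_apply_eq_self,
    inner_self_eq_one_of_norm_eq_one (b.orthonormal.1 k)]

end HilbertBasis

section

variable {𝕜 E : Type*} [RCLike 𝕜] [NormedAddCommGroup E] [InnerProductSpace 𝕜 E]

theorem norm_sub_sq_le_of_inner_eq_ofReal_inv {e u v : E} {r : ℝ} (he : ‖e‖ = 1) (hu : ‖u‖ ≤ 1)
    (hr : 0 < r) (heu : ⟪e, u⟫_𝕜 = r) (hev : ⟪e, v⟫_𝕜 = (r⁻¹ : ℝ)) :
    ‖e - u‖ ^ 2 ≤ ‖v‖ ^ 2 - 1 ∧ ‖e - v‖ ^ 2 ≤ ‖v‖ ^ 2 - 1 := by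
  have hr1 : r ≤ 1 := by
    have h := norm_inner_le_norm (𝕜 := 𝕜) e u
    rw [heu, he, one_mul, RCLike.norm_ofReal, abs_of_pos hr] at h
    exact h.trans hu
  have hrv : r⁻¹ ≤ ‖v‖ := by
    have h := norm_inner_le_norm (𝕜 := 𝕜) e v
    rwa [hev, he, one_mul, RCLike.norm_ofReal, abs_of_pos (inv_pos.2 hr)] at h
  have hr_inv_sq : 3 - 2 * r ≤ r⁻¹ ^ 2 := by
    rw [inv_pow, ← one_div, le_div_iff₀ (by positivity)]
    nlinarith [mul_nonneg (sq_nonneg (1 - r)) (by linarith : 0 ≤ 1 + 2 * r)]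
  rw [@norm_sub_sq 𝕜, @norm_sub_sq 𝕜, heu, hev, RCLike.ofReal_re, RCLike.ofReal_re, he]
  constructor
  · nlinarith [pow_le_pow_left₀ (inv_pos.2 hr).le hrv 2, norm_nonneg u]
  · nlinarith [one_le_inv_iff₀.2 ⟨hr, hr1⟩]

variable [CompleteSpace E] {C R S : E →L[𝕜] E}

theorem norm_apply_sq_eq_of_adjoint_comp_self_eq (hM : adjoint R ∘L R = 1 - adjoint C ∘L C)
    (x : E) :
    ‖R x‖ ^ 2 = ‖x‖ ^ 2 - ‖C x‖ ^ 2 := by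
  have h := congr(RCLike.re ⟪x, $hM x⟫_𝕜)
  simpa [adjoint_inner_right, inner_sub_right, inner_self_eq_norm_sq] using h

theorem norm_apply_le_of_adjoint_comp_self_eq (hM : adjoint R ∘L R = 1 - adjoint C ∘L C)
    (x : E) :
    ‖R x‖ ≤ ‖x‖ := by
  have h := norm_apply_sq_eq_of_adjoint_comp_self_eq hM x
  nlinarith [norm_nonneg (R x), norm_nonneg x, sq_nonneg ‖C x‖]

theorem comp_adjoint_eq_of_adjoint_comp_self_eq (hM : adjoint R ∘L R = 1 - adjoint C ∘L C)
    (hSR : S ∘L R = 1) (hRS : R ∘L S = 1) :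
    S ∘L adjoint S =
      1 + adjoint C ∘L C + (adjoint C ∘L C) ∘L (S ∘L adjoint S) ∘L (adjoint C ∘L C) := by
  change adjoint R * R = 1 - adjoint C * C at hM
  change S * R = 1 at hSR
  change R * S = 1 at hRS
  change S * adjoint S = 1 + adjoint C * C + adjoint C * C * (S * adjoint S) * (adjoint C * C)
  set D := adjoint C * C
  set P := S * adjoint S
  have hSR' : adjoint R * adjoint S = 1 := by
    have h : adjoint (S * R) = adjoint R * adjoint S := adjoint_comp S R
    rw [← h, hSR, adjoint_one]
  have hRS' : adjoint S * adjoint R = 1 := by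
    have h : adjoint (R * S) = adjoint S * adjoint R := adjoint_comp R S
    rw [← h, hRS, adjoint_one]
  have hDP : P = 1 + D * P := by
    have : (1 - D) * P = 1 := by
      rw [← hM, mul_assoc, ← mul_assoc R, hRS, one_mul, hSR']
    rw [sub_mul, one_mul] at this
    exact eq_add_of_sub_eq this
  have hPD : P = 1 + P * D := by
    have : P * (1 - D) = 1 := by
      rw [← hM, mul_assoc, ← mul_assoc (adjoint S), hRS', one_mul, hSR]
    rw [mul_sub, mul_one] at this
    exact eq_add_of_sub_eq this
  calc P = 1 + D * (1 + P * D) := by rw [← hPD, ← hDP]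
    _ = 1 + D + D * P * D := by noncomm_ring

theorem norm_adjoint_apply_sq_eq (hM : adjoint R ∘L R = 1 - adjoint C ∘L C)
    (hSR : S ∘L R = 1) (hRS : R ∘L S = 1) (x : E) :
    ‖adjoint S x‖ ^ 2 = ‖x‖ ^ 2 + ‖C x‖ ^ 2 + ‖adjoint S (adjoint C (C x))‖ ^ 2 := by
  have hP := comp_adjoint_eq_of_adjoint_comp_self_eq hM hSR hRS
  have h := congr(RCLike.re ⟪x, $hP x⟫_𝕜)
  have hSS : RCLike.re ⟪x, (S ∘L adjoint S) x⟫_𝕜 = ‖adjoint S x‖ ^ 2 := by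
    rw [apply_norm_sq_eq_inner_adjoint_right (adjoint S), adjoint_adjoint]
  have hDPD : ⟪x, ((adjoint C ∘L C) ∘L (S ∘L adjoint S) ∘L (adjoint C ∘L C)) x⟫_𝕜 =
      ⟪adjoint S (adjoint C (C x)), adjoint S (adjoint C (C x))⟫_𝕜 := by
    simp only [comp_apply]
    rw [adjoint_inner_right, ← adjoint_inner_left C, ← adjoint_inner_left S]
  rw [add_apply, add_apply, one_apply_eq_self, inner_add_right, inner_add_right, map_add, map_add,
    hSS, ← apply_norm_sq_eq_inner_adjoint_right, hDPD, inner_self_eq_norm_sq,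
    inner_self_eq_norm_sq] at h
  exact h

theorem norm_adjoint_apply_sq_le (hM : adjoint R ∘L R = 1 - adjoint C ∘L C)
    (hSR : S ∘L R = 1) (hRS : R ∘L S = 1) (x : E) :
    ‖adjoint S x‖ ^ 2 ≤ ‖x‖ ^ 2 + (1 + (‖S‖ * ‖C‖) ^ 2) * ‖C x‖ ^ 2 := by
  have h : ‖adjoint S (adjoint C (C x))‖ ≤ ‖S‖ * ‖C‖ * ‖C x‖ := calc
    _ ≤ ‖adjoint S‖ * ‖adjoint C (C x)‖ := le_opNorm _ _
    _ ≤ ‖adjoint S‖ * (‖adjoint C‖ * ‖C x‖) := by gcongr; exact le_opNorm _ _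
    _ = ‖S‖ * ‖C‖ * ‖C x‖ := by
      rw [LinearIsometryEquiv.norm_map, LinearIsometryEquiv.norm_map, mul_assoc]
  rw [norm_adjoint_apply_sq_eq hM hSR hRS]
  nlinarith [pow_le_pow_left₀ (norm_nonneg _) h 2]

end

namespace HilbertBasis

variable {𝕜 E : Type*} [RCLike 𝕜] [NormedAddCommGroup E] [InnerProductSpace 𝕜 E]
  [CompleteSpace E] {b : HilbertBasis ℕ 𝕜 E} {C R S : E →L[𝕜] E}

theorem IsUpperTriangular.norm_sub_apply_sq_le_and_norm_sub_adjoint_apply_sq_le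
    (hR : b.IsUpperTriangular R) (hdiag : ∀ j, 0 < ⟪b j, R (b j)⟫_𝕜)
    (hM : adjoint R ∘L R = 1 - adjoint C ∘L C) (hSR : S ∘L R = 1) (j : ℕ) :
    ‖b j - R (b j)‖ ^ 2 ≤ ‖adjoint S (b j)‖ ^ 2 - 1 ∧
      ‖b j - adjoint S (b j)‖ ^ 2 ≤ ‖adjoint S (b j)‖ ^ 2 - 1 := by
  obtain ⟨r, hr, hRr⟩ := RCLike.pos_iff_exists_ofReal.1 (hdiag j)
  have hbj : ‖b j‖ = 1 := b.orthonormal.1 j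
  have hSr : ⟪b j, adjoint S (b j)⟫_𝕜 = (r⁻¹ : ℝ) := by
    have h := hR.inner_apply_self_mul_inner_apply_self_eq_one hSR j
    rw [← hRr] at h
    rw [adjoint_inner_right, ← inner_conj_symm, eq_inv_of_mul_eq_one_left h, map_inv₀,
      RCLike.conj_ofReal, RCLike.ofReal_inv]
  exact norm_sub_sq_le_of_inner_eq_ofReal_inv hbj
    (hbj ▸ norm_apply_le_of_adjoint_comp_self_eq hM (b j)) hr hRr.symm hSr

theorem IsUpperTriangular.summable_norm_one_sub_apply_sq_and_norm_adjoint_one_sub_apply_sq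
    (hR : b.IsUpperTriangular R) (hdiag : ∀ j, 0 < ⟪b j, R (b j)⟫_𝕜)
    (hM : adjoint R ∘L R = 1 - adjoint C ∘L C) (hSR : S ∘L R = 1) (hRS : R ∘L S = 1) (hC : Summable fun j => ‖C (b j)‖ ^ 2) :
    (Summable fun j => ‖(1 - R) (b j)‖ ^ 2) ∧
      Summable fun j => ‖adjoint (1 - S) (b j)‖ ^ 2 := by
  have hest := hR.norm_sub_apply_sq_le_and_norm_sub_adjoint_apply_sq_le hdiag hM hSR
  have hS : Summable fun j => ‖adjoint S (b j)‖ ^ 2 - 1 := by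
    refine Summable.of_nonneg_of_le (fun j => (sq_nonneg _).trans (hest j).2) (fun j => ?_)
      (hC.mul_left (1 + (‖S‖ * ‖C‖) ^ 2))
    have h := norm_adjoint_apply_sq_le hM hSR hRS (b j)
    rw [b.orthonormal.1 j] at h
    linarith
  constructor
  · refine Summable.of_nonneg_of_le (fun _ => sq_nonneg _) (fun j => ?_) hS
    simpa using (hest j).1
  · refine Summable.of_nonneg_of_le (fun _ => sq_nonneg _) (fun j => ?_) hS
    simpa [map_sub, adjoint_one] using (hest j).2

end HilbertBasis

theorem grunsky_hilbert_schmidt_general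
    (C R Rinv : lp (fun _ : ℕ => ℂ) 2 →L[ℂ] lp (fun _ : ℕ => ℂ) 2)
    (hRtri : ∀ j k : ℕ, k < j → (inner ℂ (lp.single 2 j (1:ℂ)) (R (lp.single 2 k (1:ℂ))) : ℂ) = 0)
    (hRdiagRe : ∀ n : ℕ,
      0 < (inner ℂ (lp.single 2 n (1:ℂ)) (R (lp.single 2 n (1:ℂ))) : ℂ).re)
    (hRdiagIm : ∀ n : ℕ,
      (inner ℂ (lp.single 2 n (1:ℂ)) (R (lp.single 2 n (1:ℂ))) : ℂ).im = 0)
    (hM : adjoint R ∘L R = 1 - adjoint C ∘L C)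
    (hRinv : R ∘L Rinv = 1 ∧ Rinv ∘L R = 1)
    (ε : ℕ → ℝ) (hε : ∀ n, ε n = ‖C (lp.single 2 n (1:ℂ))‖^2)
    (hHS : Summable ε) :
    Summable (fun j : ℕ => ‖(1 - R) (lp.single 2 j (1:ℂ))‖^2) ∧
    Summable (fun j : ℕ => ‖(adjoint (1 - Rinv)) (lp.single 2 j (1:ℂ))‖^2) := by
  let b : HilbertBasis ℕ ℂ (lp (fun _ : ℕ => ℂ) 2) := default
  have hb (j : ℕ) : b j = lp.single 2 j 1 := (b.repr_symm_single j).symm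
  have hR : b.IsUpperTriangular R := fun j k hjk => by simpa only [hb] using hRtri j k hjk
  have hdiag (j : ℕ) : 0 < ⟪b j, R (b j)⟫_ℂ := by
    rw [hb]; exact RCLike.pos_iff.2 ⟨hRdiagRe j, hRdiagIm j⟩
  have hC : Summable fun j => ‖C (b j)‖ ^ 2 := by simpa only [hb, ← hε] using hHS
  simpa only [hb] using
    hR.summable_norm_one_sub_apply_sq_and_norm_adjoint_one_sub_apply_sq hdiag hM hRinv.2 hRinv.1 hC

/-- Corollary 2.6 (Hilbert–Schmidt part): if `∑ ε_n < ∞` (i.e. `C` is Hilbert–Schmidt),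
then `∑_j ‖(I − R) e_j‖² < ∞` and `∑_j ‖(I − R⁻¹)* e_j‖² < ∞`,
i.e. both `I − R` and `I − R⁻¹` are Hilbert–Schmidt. -/
theorem grunsky_hilbert_schmidt
    (C R Rinv : lp (fun _ : ℕ => ℂ) 2 →L[ℂ] lp (fun _ : ℕ => ℂ) 2)
    (hC : ‖C‖ < 1)
    (hRtri : ∀ j k : ℕ, k < j → (inner ℂ (lp.single 2 j (1:ℂ)) (R (lp.single 2 k (1:ℂ))) : ℂ) = 0)
    (hRdiagRe : ∀ n : ℕ,
      0 < (inner ℂ (lp.single 2 n (1:ℂ)) (R (lp.single 2 n (1:ℂ))) : ℂ).re)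
    (hRdiagIm : ∀ n : ℕ,
      (inner ℂ (lp.single 2 n (1:ℂ)) (R (lp.single 2 n (1:ℂ))) : ℂ).im = 0)
    (hM : adjoint R ∘L R = 1 - adjoint C ∘L C)
    (hRinv : R ∘L Rinv = 1 ∧ Rinv ∘L R = 1)
    (ε : ℕ → ℝ) (hε : ∀ n, ε n = ‖C (lp.single 2 n (1:ℂ))‖^2)
    (hHS : Summable ε) :
    Summable (fun j : ℕ => ‖(1 - R) (lp.single 2 j (1:ℂ))‖^2) ∧
    Summable (fun j : ℕ => ‖(adjoint (1 - Rinv)) (lp.single 2 j (1:ℂ))‖^2) :=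
  grunsky_hilbert_schmidt_general C R Rinv hRtri hRdiagRe hRdiagIm hM hRinv ε hε hHS
end
end

section
/- For every n ≥ 0 and every w with |w| > 1: | √(π/(n+1)) · ψ'(w) · f_n(ψ(w)) / wⁿ − 1 | ≤ √(ε_n/(n+1)) / ((|w|² − 1) · |w|ⁿ). In particular, √(π/(n+1)) · ψ'(w) f_n(ψ(w)) / wⁿ → 1 uniformly and geometrically fast on {|w| ≥ ρ} for each ρ > 1. -/
/-!
By hypothesis, `√(π/(n+1)) ψ'(w) f_n(ψ(w)) / wⁿ - 1` is `-√(π/(n+1)) w⁻ⁿ` times the Laurent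
series `∑ C_{ℓ,n} √((ℓ+1)/π) w^(-ℓ-2)`, whose coefficients have `ℓ²`-norm `√ε_n`. Cauchy–Schwarz
bounds this series by `√ε_n` times `(∑ (ℓ+1)/π |w|^(-2ℓ-4))^(1/2) = 1/(√π (|w|²-1))`, which is the
estimate; with `ε_n ≤ 1` and `|w| ≥ ρ` it becomes `(ρ²-1)⁻¹ ρ⁻ⁿ`.
-/

open Filter Real

theorem norm_tsum_mul_le_of_hasSum_norm_sq {ι : Type*} {a c : ι → ℂ} {A : ℝ} (hA : 0 ≤ A)
    (ha : HasSum (fun i => ‖a i‖ ^ 2) (A ^ 2)) (hc : Summable fun i => ‖c i‖ ^ 2) :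
    ‖∑' i, a i * c i‖ ≤ A * √(∑' i, ‖c i‖ ^ 2) := by
  have hc' : HasSum (fun i => ‖c i‖ ^ 2) (√(∑' i, ‖c i‖ ^ 2) ^ 2) := by
    rw [sq_sqrt (tsum_nonneg fun i => sq_nonneg _)]
    exact hc.hasSum
  obtain ⟨S, -, hSle, hS⟩ := inner_le_Lp_mul_Lq_hasSum_of_nonneg HolderConjugate.two_two hA
    (sqrt_nonneg _) (fun i => norm_nonneg (a i)) (fun i => norm_nonneg (c i))
    (by simpa only [rpow_two] using ha) (by simpa only [rpow_two] using hc')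
  exact (tsum_of_norm_bounded hS fun i => (norm_mul_le _ _)).trans hSle

theorem hasSum_succ_mul_geometric {x : ℝ} (h0 : 0 ≤ x) (h1 : x < 1) :
    HasSum (fun ℓ : ℕ => ((ℓ : ℝ) + 1) * x ^ ℓ) ((1 - x)⁻¹ ^ 2) := by
  have := hasSum_choose_mul_geometric_of_norm_lt_one (𝕜 := ℝ) 1 (r := x)
    (by rwa [norm_of_nonneg h0])
  simpa [inv_pow] using this

/-- The functions `√((ℓ+1)/π) w^(-ℓ-2)` form an orthonormal basis of the Bergman space of
`{|w| > 1}`; the sum is its reproducing kernel `1/(π(|w|²-1)²)` on the diagonal. -/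
theorem hasSum_norm_sq_exterior_bergman_basis {w : ℂ} (hw : 1 < ‖w‖) :
    HasSum (fun ℓ : ℕ => ‖((√((ℓ + 1) / π) : ℝ) : ℂ) * w ^ (-(ℓ : ℤ) - 2)‖ ^ 2)
      ((√π * (‖w‖ ^ 2 - 1))⁻¹ ^ 2) := by
  set x : ℝ := (‖w‖ ^ 2)⁻¹
  have hr2 : 1 < ‖w‖ ^ 2 := one_lt_pow₀ hw two_ne_zero
  have hx0 : 0 ≤ x := by positivity
  have hx1 : x < 1 := inv_lt_one_of_one_lt₀ hr2
  have hterm : ∀ ℓ : ℕ, ‖((√((ℓ + 1) / π) : ℝ) : ℂ) * w ^ (-(ℓ : ℤ) - 2)‖ ^ 2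
      = (π⁻¹ * x ^ 2) * (((ℓ : ℝ) + 1) * x ^ ℓ) := by
    intro ℓ
    rw [norm_mul, Complex.norm_real, norm_zpow, mul_pow, norm_of_nonneg (sqrt_nonneg _),
      sq_sqrt (by positivity), show -(ℓ : ℤ) - 2 = -((ℓ + 2 : ℕ) : ℤ) by push_cast; ring,
      zpow_neg, zpow_natCast, inv_pow, ← pow_mul, pow_mul', ← inv_pow, pow_add]
    ring
  have hsum : (π⁻¹ * x ^ 2) * (1 - x)⁻¹ ^ 2 = (√π * (‖w‖ ^ 2 - 1))⁻¹ ^ 2 := by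
    have : ‖w‖ ^ 2 - 1 ≠ 0 := by linarith
    rw [mul_inv, mul_pow, inv_pow (√π), sq_sqrt pi_pos.le]
    simp only [x]
    field_simp
  rw [← hsum]
  simpa only [hterm] using (hasSum_succ_mul_geometric hx0 hx1).mul_left (π⁻¹ * x ^ 2)

theorem norm_sqrt_mul_div_pow_sub_one_le {n : ℕ} {w d : ℂ} {c : ℕ → ℂ} (hw : 1 < ‖w‖)
    (hc : Summable fun ℓ => ‖c ℓ‖ ^ 2)
    (hd : d - ((√(((n : ℝ) + 1) / π) : ℝ) : ℂ) * w ^ n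
      = -∑' ℓ : ℕ, ((√((ℓ + 1) / π) : ℝ) : ℂ) * w ^ (-(ℓ : ℤ) - 2) * c ℓ) :
    ‖((√(π / ((n : ℝ) + 1)) : ℝ) : ℂ) * d / w ^ n - 1‖
      ≤ √((∑' ℓ, ‖c ℓ‖ ^ 2) / ((n : ℝ) + 1)) / ((‖w‖ ^ 2 - 1) * ‖w‖ ^ n) := by
  set A : ℝ := √(π / ((n : ℝ) + 1))
  set S := ∑' ℓ : ℕ, ((√((ℓ + 1) / π) : ℝ) : ℂ) * w ^ (-(ℓ : ℤ) - 2) * c ℓ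
  have hw0 : w ≠ 0 := norm_pos_iff.mp (one_pos.trans hw)
  have hA : (A : ℂ) * ((√(((n : ℝ) + 1) / π) : ℝ) : ℂ) = 1 := by
    rw [← Complex.ofReal_mul, ← sqrt_mul (by positivity), div_mul_div_cancel₀',
      div_self (by positivity), sqrt_one, Complex.ofReal_one]
    exact pi_ne_zero
  have hsub : (A : ℂ) * d / w ^ n - 1 = -((A : ℂ) * S) / w ^ n := by
    field_simp
    linear_combination (A : ℂ) * hd + w ^ n * hA
  have hS : ‖S‖ ≤ (√π * (‖w‖ ^ 2 - 1))⁻¹ * √(∑' ℓ, ‖c ℓ‖ ^ 2) :=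
    norm_tsum_mul_le_of_hasSum_norm_sq (by have := one_lt_pow₀ hw two_ne_zero; positivity)
      (hasSum_norm_sq_exterior_bergman_basis hw) hc
  have hr : 0 < ‖w‖ ^ 2 - 1 := by nlinarith
  rw [hsub, norm_div, norm_neg, norm_mul, Complex.norm_real, norm_of_nonneg (sqrt_nonneg _),
    norm_pow]
  calc A * ‖S‖ / ‖w‖ ^ n
      ≤ A * ((√π * (‖w‖ ^ 2 - 1))⁻¹ * √(∑' ℓ, ‖c ℓ‖ ^ 2)) / ‖w‖ ^ n := by gcongr
    _ = _ := by
      simp only [A]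
      rw [sqrt_div' _ (by positivity : (0:ℝ) ≤ (n : ℝ) + 1), sqrt_div' _ (by positivity)]
      field_simp

theorem sqrt_div_succ_div_le_geometric {e ρ r : ℝ} (n : ℕ) (he : e ≤ 1) (hρ : 1 < ρ)
    (hρr : ρ ≤ r) :
    √(e / ((n : ℝ) + 1)) / ((r ^ 2 - 1) * r ^ n) ≤ (ρ ^ 2 - 1)⁻¹ * ρ⁻¹ ^ n := by
  have hnum : √(e / ((n : ℝ) + 1)) ≤ 1 :=
    sqrt_le_one.mpr (div_le_one_of_le₀ (by linarith [n.cast_nonneg (α := ℝ)]) (by positivity))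
  have hρ0 : 0 < ρ := one_pos.trans hρ
  have hρ2 : 1 < ρ ^ 2 := one_lt_pow₀ hρ two_ne_zero
  have hr2 : ρ ^ 2 ≤ r ^ 2 := by gcongr
  calc √(e / ((n : ℝ) + 1)) / ((r ^ 2 - 1) * r ^ n)
      ≤ 1 / ((ρ ^ 2 - 1) * ρ ^ n) := by
        have : 0 < ρ ^ 2 - 1 := by linarith
        gcongr
        linarith
    _ = (ρ ^ 2 - 1)⁻¹ * ρ⁻¹ ^ n := by rw [one_div, mul_inv, inv_pow]

theorem faber_exterior_asymptotics_general
    (ψ : ℂ → ℂ)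
    (f : ℕ → ℂ → ℂ)
    (C : ℕ → ℕ → ℂ)
    (ε : ℕ → ℝ) (hε : ∀ n, ε n = ∑' ℓ, ‖C ℓ n‖^2)
    (hCsum : ∀ n, Summable (fun ℓ => ‖C ℓ n‖^2))
    (hεle : ∀ n, ε n ≤ 1)
    (hresid : ∀ n : ℕ, ∀ w : ℂ, 1 < ‖w‖ →
      deriv ψ w * f n (ψ w) - ((Real.sqrt ((n+1)/π) : ℝ) : ℂ) * w^n
        = - ∑' ℓ : ℕ, ((Real.sqrt ((ℓ+1)/π) : ℝ) : ℂ) * w^(-(ℓ:ℤ)-2) * C ℓ n) :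
    (∀ n : ℕ, ∀ w : ℂ, 1 < ‖w‖ →
      ‖((Real.sqrt (π/(n+1)) : ℝ) : ℂ) * deriv ψ w * f n (ψ w) / w^n - 1‖
        ≤ Real.sqrt (ε n / (n+1)) / ((‖w‖^2 - 1) * ‖w‖^n)) ∧
    (∀ ρ : ℝ, 1 < ρ → ∃ c : ℝ, 0 < c ∧ ∃ q : ℝ, 0 ≤ q ∧ q < 1 ∧
      ∀ n : ℕ, ∀ w : ℂ, ρ ≤ ‖w‖ →
        ‖((Real.sqrt (π/(n+1)) : ℝ) : ℂ) * deriv ψ w * f n (ψ w) / w^n - 1‖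
          ≤ c * q^n) := by
  have hbound : ∀ n : ℕ, ∀ w : ℂ, 1 < ‖w‖ →
      ‖((√(π / (n + 1)) : ℝ) : ℂ) * deriv ψ w * f n (ψ w) / w ^ n - 1‖
        ≤ √(ε n / (n + 1)) / ((‖w‖ ^ 2 - 1) * ‖w‖ ^ n) := fun n w hw => by
    rw [mul_assoc, hε]
    exact norm_sqrt_mul_div_pow_sub_one_le hw (hCsum n) (hresid n w hw)
  refine ⟨hbound, fun ρ hρ => ⟨(ρ ^ 2 - 1)⁻¹, ?_, ρ⁻¹, by positivity,
    inv_lt_one_of_one_lt₀ hρ, fun n w hw =>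
      (hbound n w (hρ.trans_le hw)).trans (sqrt_div_succ_div_le_geometric n (hεle n) hρ hw)⟩⟩
  exact inv_pos.mpr (sub_pos.mpr (one_lt_pow₀ hρ two_ne_zero))

/-- Estimate (1.15)–(1.16): for `|w| > 1`,
`|√(π/(n+1)) ψ'(w) f_n(ψ(w))/wⁿ − 1| ≤ √(ε_n/(n+1)) / ((|w|²−1)|w|ⁿ)`; in particular the
left-hand side tends to `0` uniformly and geometrically fast on each set `{|w| ≥ ρ}`, `ρ > 1`. -/
theorem faber_exterior_asymptotics
    (γ : ℝ) (hγ : 0 < γ) (ψ : ℂ → ℂ)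
    (hψdiff : DifferentiableOn ℂ ψ {w : ℂ | 1 < ‖w‖})
    (hψinj : Set.InjOn ψ {w : ℂ | 1 < ‖w‖})
    (hψinf : Tendsto (fun w => ψ w / w) (comap (fun w : ℂ => ‖w‖) atTop) (nhds ((1:ℂ)/γ)))
    (F : ℕ → Polynomial ℂ)
    (hFdeg : ∀ n : ℕ, (F (n+1)).degree = (n+1 : ℕ))
    (hFlead : ∀ n : ℕ, (F (n+1)).leadingCoeff = (γ : ℂ)^(n+1))
    (f : ℕ → ℂ → ℂ)
    (hf : ∀ n z, f n z = (F (n+1)).derivative.eval z / ((Real.sqrt (π * (n+1)) : ℝ) : ℂ))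
    (C : ℕ → ℕ → ℂ)
    (ε : ℕ → ℝ) (hε : ∀ n, ε n = ∑' ℓ, ‖C ℓ n‖^2)
    (hCsum : ∀ n, Summable (fun ℓ => ‖C ℓ n‖^2))
    (hεle : ∀ n, ε n ≤ 1)
    (hresidsum : ∀ n : ℕ, ∀ w : ℂ, 1 < ‖w‖ →
      Summable (fun ℓ : ℕ =>
        ‖((Real.sqrt ((ℓ+1)/π) : ℝ) : ℂ) * w^(-(ℓ:ℤ)-2) * C ℓ n‖))
    (hresid : ∀ n : ℕ, ∀ w : ℂ, 1 < ‖w‖ →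
      deriv ψ w * f n (ψ w) - ((Real.sqrt ((n+1)/π) : ℝ) : ℂ) * w^n
        = - ∑' ℓ : ℕ, ((Real.sqrt ((ℓ+1)/π) : ℝ) : ℂ) * w^(-(ℓ:ℤ)-2) * C ℓ n) :
    (∀ n : ℕ, ∀ w : ℂ, 1 < ‖w‖ →
      ‖((Real.sqrt (π/(n+1)) : ℝ) : ℂ) * deriv ψ w * f n (ψ w) / w^n - 1‖
        ≤ Real.sqrt (ε n / (n+1)) / ((‖w‖^2 - 1) * ‖w‖^n)) ∧
    (∀ ρ : ℝ, 1 < ρ → ∃ c : ℝ, 0 < c ∧ ∃ q : ℝ, 0 ≤ q ∧ q < 1 ∧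
      ∀ n : ℕ, ∀ w : ℂ, ρ ≤ ‖w‖ →
        ‖((Real.sqrt (π/(n+1)) : ℝ) : ℂ) * deriv ψ w * f n (ψ w) / w^n - 1‖
          ≤ c * q^n) :=
  faber_exterior_asymptotics_general ψ f C ε hε hCsum hεle hresid
end

section
/- For every n ≥ 0 the polynomial identity z · F'_{n+1}(z)/(n+1) = ∑_{j=0}^{n+1} ψ_{j−n} · F'_{j+1}(z)/(j+1) holds for all z ∈ ℂ; equivalently, with f_n := F'_{n+1}/√(π(n+1)), one has z · f_n(z) = ∑_{j=0}^{n+1} √((n+1)/(j+1)) · ψ_{j−n} · f_j(z). -/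
open Filter Topology Polynomial Bornology Metric

/-!
Set `G = X F'_{n+1}/(n+1) - ∑_j ψ_{j-n} F'_{j+1}/(j+1)`; it suffices to show that `G(ψ(w)) → 0`
as `|w| → ∞`, since `|ψ(w)| → ∞` and only the zero polynomial stays bounded along such a path.
Put `d_j(w) = ψ'(w) F'_{j+1}(ψ(w))/(j+1)`, the derivative of `F_{j+1}(ψ(w))/(j+1)`.
Cauchy's estimate on the disc of radius `|w|/2` turns `F_{j+1}(ψ(w)) - w^{j+1} → 0` into
`d_j(w) = w^j + o(1/w)`. Since `ψ(w) = O(w)`, this yields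
`ψ'(w) G(ψ(w)) = ψ(w) d_n(w) - ∑_j ψ_{j-n} d_j(w) = ψ(w) w^n - ∑_j ψ_{j-n} w^j + o(1)`,
and the right-hand side is the tail `∑_{k ≥ 0} ψ_{-k-n-1} w^{-k-1}` of the Laurent series of
`ψ(w) w^n`, which tends to `0`. Finally `ψ'(w) → ψ₁ ≠ 0`.
-/

lemma zpow_neg_natCast_sub_one {K : Type*} [DivisionRing K] (x : K) (k : ℕ) :
    x ^ (-(k : ℤ) - 1) = x⁻¹ ^ (k + 1) := by
  rw [show -(k : ℤ) - 1 = -((k + 1 : ℕ) : ℤ) by push_cast; ring, zpow_neg, zpow_natCast, inv_pow]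

section PowerSeries

variable {𝕜 : Type*} [NormedField 𝕜]

lemma summable_norm_mul_pow_succ_nat_add {c : ℕ → 𝕜} {u : 𝕜} (hu : u ≠ 0) (n : ℕ)
    (hc : Summable fun k => ‖c k * u ^ (k + 1)‖) :
    Summable fun k => ‖c (k + n) * u ^ (k + 1)‖ := by
  refine (((summable_nat_add_iff n).2 hc).div_const (‖u‖ ^ n)).congr fun k => ?_
  rw [norm_mul, norm_mul, norm_pow, norm_pow, show k + n + 1 = k + 1 + n by ring, pow_add]
  field_simp

lemma tsum_mul_pow_succ_mul_inv {c : ℕ → 𝕜} {u : 𝕜} (hu : u ≠ 0)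
    (hc : Summable fun k => c k * u ^ (k + 1)) :
    (∑' k, c k * u ^ (k + 1)) * u⁻¹ = c 0 + ∑' k, c (k + 1) * u ^ (k + 1) := by
  rw [hc.tsum_eq_zero_add, add_mul, ← tsum_mul_right]
  congr 1
  · field_simp
    ring
  · exact tsum_congr fun k => by rw [pow_succ _ (k + 1)]; field_simp

lemma tendsto_tsum_mul_pow_succ_nhds_zero [CompleteSpace 𝕜] {c : ℕ → 𝕜} {u₀ : 𝕜} (hu₀ : u₀ ≠ 0)
    (hc : Summable fun k => ‖c k * u₀ ^ (k + 1)‖) :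
    Tendsto (fun u => ∑' k, c k * u ^ (k + 1)) (𝓝 0) (𝓝 0) := by
  have hlim : ∀ k, Tendsto (fun u : 𝕜 => c k * u ^ (k + 1)) (𝓝 0) (𝓝 0) := fun k => by
    simpa using ((continuous_pow (k + 1)).tendsto (0 : 𝕜)).const_mul (c k)
  have hbound : ∀ᶠ u in 𝓝 (0 : 𝕜), ∀ k, ‖c k * u ^ (k + 1)‖ ≤ ‖c k * u₀ ^ (k + 1)‖ := by
    filter_upwards [closedBall_mem_nhds (0 : 𝕜) (norm_pos_iff.2 hu₀)] with u hu k
    rw [mem_closedBall_zero_iff] at hu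
    rw [norm_mul, norm_mul, norm_pow, norm_pow]
    gcongr
  simpa using tendsto_tsum_of_dominated_convergence hc hlim hbound

end PowerSeries

section Cobounded

variable {𝕜 : Type*} [NormedField 𝕜]

lemma tendsto_div_of_tendsto_sub_affine {f : 𝕜 → 𝕜} {a b : 𝕜}
    (hf : Tendsto (fun w => f w - (a * w + b)) (cobounded 𝕜) (𝓝 0)) :
    Tendsto (fun w => f w / w) (cobounded 𝕜) (𝓝 a) := by
  have hlim := tendsto_const_nhds (x := a) |>.add
    ((tendsto_const_nhds (x := b) |>.add hf).mul tendsto_inv₀_cobounded)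
  rw [add_zero, mul_zero, add_zero] at hlim
  refine hlim.congr' ((eventually_ne_cobounded 0).mono fun w hw => ?_)
  field_simp
  ring

lemma tendsto_cobounded_of_tendsto_div {f : 𝕜 → 𝕜} {a : 𝕜} (ha : a ≠ 0)
    (hf : Tendsto (fun w => f w / w) (cobounded 𝕜) (𝓝 a)) :
    Tendsto f (cobounded 𝕜) (cobounded 𝕜) := by
  rw [← tendsto_norm_atTop_iff_cobounded]
  refine (hf.norm.pos_mul_atTop (norm_pos_iff.2 ha) tendsto_norm_cobounded_atTop).congr'
    ((eventually_ne_cobounded 0).mono fun w hw => ?_)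
  rw [← norm_mul, div_mul_cancel₀ _ hw]

lemma Polynomial.eq_zero_of_tendsto_eval_nhds_zero {α : Type*} {p : 𝕜[X]} {l : Filter α}
    [l.NeBot] {z : α → 𝕜} (hz : Tendsto z l (cobounded 𝕜))
    (hp : Tendsto (fun x => p.eval (z x)) l (𝓝 0)) : p = 0 := by
  by_cases hdeg : 0 < p.degree
  · exact absurd hp.norm (not_tendsto_nhds_of_tendsto_atTop
      (p.tendsto_norm_atTop hdeg (tendsto_norm_atTop_iff_cobounded.2 hz)) _)
  · rw [eq_C_of_degree_le_zero (not_lt.1 hdeg)] at hp ⊢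
    simp only [eval_C] at hp
    rw [tendsto_const_nhds_iff.1 hp, C_0]

lemma tendsto_mul_sub_sum_of_tendsto_mul_sub_pow {f : 𝕜 → 𝕜} {d : ℕ → 𝕜 → 𝕜} {c : ℕ → 𝕜}
    {a : 𝕜} {n : ℕ} {s : Finset ℕ}
    (hf : Tendsto (fun w => f w / w) (cobounded 𝕜) (𝓝 a))
    (hd : ∀ j, Tendsto (fun w => w * (d j w - w ^ j)) (cobounded 𝕜) (𝓝 0))
    (hpoly : Tendsto (fun w => f w * w ^ n - ∑ j ∈ s, c j * w ^ j) (cobounded 𝕜) (𝓝 0)) :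
    Tendsto (fun w => f w * d n w - ∑ j ∈ s, c j * d j w) (cobounded 𝕜) (𝓝 0) := by
  have hd' : ∀ j, Tendsto (fun w => d j w - w ^ j) (cobounded 𝕜) (𝓝 0) := fun j => by
    refine (zero_mul (0 : 𝕜) ▸ tendsto_inv₀_cobounded.mul (hd j)).congr'
      ((eventually_ne_cobounded 0).mono fun w hw => inv_mul_cancel_left₀ hw _)
  have hsum := tendsto_finsetSum s fun j _ => (hd' j).const_mul (c j)
  have hlim := (hpoly.add (hf.mul (hd n))).sub hsum
  simp only [mul_zero, Finset.sum_const_zero, add_zero, sub_zero] at hlim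
  refine hlim.congr' ((eventually_ne_cobounded 0).mono fun w hw => ?_)
  simp only [mul_sub, Finset.sum_sub_distrib, ← mul_assoc, div_mul_cancel₀ _ hw]
  ring

end Cobounded

section Derivatives

lemma tendsto_smul_deriv_cobounded {E : Type*} [NormedAddCommGroup E] [NormedSpace ℂ E]
    {g : ℂ → E} {R : ℝ} (hg : DifferentiableOn ℂ g {w | R < ‖w‖})
    (hg₀ : Tendsto g (cobounded ℂ) (𝓝 0)) :
    Tendsto (fun w => w • deriv g w) (cobounded ℂ) (𝓝 0) := by
  rw [Metric.tendsto_nhds] at hg₀ ⊢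
  intro ε hε
  obtain ⟨r, hr⟩ := hasBasis_cobounded_norm.eventually_iff.1 (hg₀ (ε / 8) (by positivity))
  simp only [Set.mem_ofPred_eq, dist_zero_right, true_and] at hr
  filter_upwards [tendsto_norm_cobounded_atTop.eventually_gt_atTop (2 * max (max r R) 0)]
    with w hw
  have hw₀ : 0 < ‖w‖ := by linarith [le_max_right (max r R) 0]
  have hρ : 0 < ‖w‖ / 2 := half_pos hw₀
  have hball : ∀ ζ ∈ ball w (‖w‖ / 2), max r R < ‖ζ‖ := fun ζ hζ => by
    rw [mem_ball, dist_eq_norm] at hζ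
    linarith [norm_sub_norm_le w ζ, norm_sub_rev w ζ, le_max_left (max r R) 0]
  have hmaps : Set.MapsTo g (ball w (‖w‖ / 2)) (closedBall (g w) (ε / 4)) := fun ζ hζ => by
    rw [mem_closedBall, dist_eq_norm]
    have hζ := hr ((le_max_left r R).trans (hball ζ hζ).le)
    have hw := hr ((le_max_left r R).trans (hball w (mem_ball_self hρ)).le)
    linarith [norm_sub_le (g ζ) (g w)]
  have hdiff : DifferentiableOn ℂ g (ball w (‖w‖ / 2)) :=
    hg.mono fun ζ hζ => (le_max_right r R).trans_lt (hball ζ hζ)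
  have hderiv := Complex.norm_deriv_le_div_of_mapsTo_ball hdiff hmaps hρ
  rw [dist_zero_right, norm_smul]
  calc ‖w‖ * ‖deriv g w‖ ≤ ‖w‖ * (ε / 4 / (‖w‖ / 2)) := by gcongr
    _ = ε / 2 := by field_simp; ring
    _ < ε := half_lt_self hε

lemma tendsto_deriv_of_tendsto_sub_affine {f : ℂ → ℂ} {a b : ℂ} {R : ℝ}
    (hf : DifferentiableOn ℂ f {w | R < ‖w‖})
    (hlim : Tendsto (fun w => f w - (a * w + b)) (cobounded ℂ) (𝓝 0)) :
    Tendsto (deriv f) (cobounded ℂ) (𝓝 a) := by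
  have hT := tendsto_smul_deriv_cobounded
    (hf.sub ((differentiable_id.const_mul a).add_const b).differentiableOn) hlim
  have hlim' := (tendsto_const_nhds (x := a)).add (tendsto_inv₀_cobounded.mul hT)
  rw [mul_zero, add_zero] at hlim'
  refine hlim'.congr' ?_
  filter_upwards [eventually_ne_cobounded 0,
    tendsto_norm_cobounded_atTop.eventually_gt_atTop R] with w hw₀ hwR
  have hfw : DifferentiableAt ℂ f w :=
    hf.differentiableAt ((isOpen_lt continuous_const continuous_norm).mem_nhds hwR)
  rw [smul_eq_mul, inv_mul_cancel_left₀ hw₀, deriv_sub hfw (by fun_prop)]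
  simp

lemma tendsto_mul_deriv_eval_comp_sub {ψ : ℂ → ℂ} {R : ℝ}
    (hψ : DifferentiableOn ℂ ψ {w | R < ‖w‖}) {P : ℂ[X]} {m : ℕ}
    (hP : Tendsto (fun w => P.eval (ψ w) - w ^ (m + 1)) (cobounded ℂ) (𝓝 0)) :
    Tendsto (fun w => w * (deriv ψ w * P.derivative.eval (ψ w) / (m + 1) - w ^ m))
      (cobounded ℂ) (𝓝 0) := by
  have hg : DifferentiableOn ℂ (fun w => P.eval (ψ w) - w ^ (m + 1)) {w | R < ‖w‖} :=
    (P.differentiable.comp_differentiableOn hψ).sub (differentiable_pow _).differentiableOn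
  have hlim := (tendsto_smul_deriv_cobounded hg hP).div_const ((m : ℂ) + 1)
  rw [zero_div] at hlim
  refine hlim.congr' ((tendsto_norm_cobounded_atTop.eventually_gt_atTop R).mono fun w hw => ?_)
  have hψw : HasDerivAt ψ (deriv ψ w) w :=
    (hψ.differentiableAt ((isOpen_lt continuous_const continuous_norm).mem_nhds hw)).hasDerivAt
  have hg' : HasDerivAt (fun w => P.eval (ψ w) - w ^ (m + 1))
      (P.derivative.eval (ψ w) * deriv ψ w - (m + 1 : ℕ) * w ^ m) w :=
    ((P.hasDerivAt (ψ w)).comp w hψw).sub (hasDerivAt_pow (m + 1) w)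
  rw [hg'.deriv, smul_eq_mul]
  field_simp
  push_cast
  ring

end Derivatives

section Laurent

variable {ψ : ℂ → ℂ} {ψcoef : ℤ → ℂ}

lemma laurent_mul_pow_sub_sum_eq_tsum
    (hlaurSum : ∀ w : ℂ, 1 < ‖w‖ →
      Summable (fun k : ℕ => ‖ψcoef (-(k:ℤ)-1) * w^(-(k:ℤ)-1)‖))
    (hlaur : ∀ w : ℂ, 1 < ‖w‖ →
      ψ w = ψcoef 1 * w + ψcoef 0 + ∑' k : ℕ, ψcoef (-(k:ℤ)-1) * w^(-(k:ℤ)-1))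
    {w : ℂ} (hw : 1 < ‖w‖) (n : ℕ) :
    ψ w * w ^ n - ∑ j ∈ Finset.range (n + 2), ψcoef (j - n) * w ^ j
      = ∑' k : ℕ, ψcoef (-((k + n : ℕ) : ℤ) - 1) * w⁻¹ ^ (k + 1) := by
  simp_rw [zpow_neg_natCast_sub_one] at hlaurSum hlaur
  have hw₀ : w⁻¹ ≠ 0 := inv_ne_zero (norm_pos_iff.1 (one_pos.trans hw))
  induction n with
  | zero => simp [hlaur w hw, Finset.sum_range_succ]; ring
  | succ n ih =>
    have hsum := (summable_norm_mul_pow_succ_nat_add hw₀ n (hlaurSum w hw)).of_norm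
    have hshift := tsum_mul_pow_succ_mul_inv hw₀ hsum
    rw [← ih, inv_inv, zero_add] at hshift
    have hsplit : ∑ j ∈ Finset.range (n + 3), ψcoef (j - (n + 1 : ℕ)) * w ^ j
        = (∑ j ∈ Finset.range (n + 2), ψcoef (j - n) * w ^ j) * w + ψcoef (-(n : ℤ) - 1) := by
      rw [Finset.sum_range_succ', Finset.sum_mul]
      congr 1
      · refine Finset.sum_congr rfl fun j _ => ?_
        rw [pow_succ, ← mul_assoc]
        congr 3
        push_cast
        ring
      · rw [pow_zero, mul_one]
        push_cast
        ring_nf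
    simp only [show ∀ k, k + (n + 1) = k + 1 + n by omega]
    linear_combination hshift - hsplit

lemma tendsto_laurent_mul_pow_sub_sum
    (hlaurSum : ∀ w : ℂ, 1 < ‖w‖ →
      Summable (fun k : ℕ => ‖ψcoef (-(k:ℤ)-1) * w^(-(k:ℤ)-1)‖))
    (hlaur : ∀ w : ℂ, 1 < ‖w‖ →
      ψ w = ψcoef 1 * w + ψcoef 0 + ∑' k : ℕ, ψcoef (-(k:ℤ)-1) * w^(-(k:ℤ)-1))
    (n : ℕ) :
    Tendsto (fun w => ψ w * w ^ n - ∑ j ∈ Finset.range (n + 2), ψcoef (j - n) * w ^ j)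
      (cobounded ℂ) (𝓝 0) := by
  have h2 : (2 : ℂ)⁻¹ ≠ 0 := inv_ne_zero two_ne_zero
  have hsum := summable_norm_mul_pow_succ_nat_add h2 n
    (by simpa only [zpow_neg_natCast_sub_one] using hlaurSum 2 (by norm_num))
  refine ((tendsto_tsum_mul_pow_succ_nhds_zero h2 hsum).comp tendsto_inv₀_cobounded).congr'
    ((tendsto_norm_cobounded_atTop.eventually_gt_atTop 1).mono fun w hw => ?_)
  exact (laurent_mul_pow_sub_sum_eq_tsum hlaurSum hlaur hw n).symm

end Laurent

theorem faber_multiplication_general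
    (ψ : ℂ → ℂ)
    (hψdiff : DifferentiableOn ℂ ψ {w : ℂ | 1 < ‖w‖})
    -- Laurent expansion `ψ(w) = ψ₁ w + ψ₀ + ∑_{k≥1} ψ_{−k} w^{−k}`, `ψ₁ ≠ 0`,
    -- absolutely convergent on `𝔻*`; we write `ψcoef m` for `ψ_m`
    (ψcoef : ℤ → ℂ) (hψ1 : ψcoef 1 ≠ 0)
    (hlaurSum : ∀ w : ℂ, 1 < ‖w‖ →
      Summable (fun k : ℕ => ‖ψcoef (-(k:ℤ)-1) * w^(-(k:ℤ)-1)‖))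
    (hlaur : ∀ w : ℂ, 1 < ‖w‖ →
      ψ w = ψcoef 1 * w + ψcoef 0 + ∑' k : ℕ, ψcoef (-(k:ℤ)-1) * w^(-(k:ℤ)-1))
    -- the Faber polynomials of `ψ`
    (F : ℕ → Polynomial ℂ)
    (hFfaber : ∀ n : ℕ, Tendsto (fun w => (F n).eval (ψ w) - w^n)
        (comap (fun w : ℂ => ‖w‖) atTop) (nhds 0)) :
    ∀ n : ℕ, ∀ z : ℂ,
      z * (F (n+1)).derivative.eval z / ((n:ℂ)+1)
        = ∑ j ∈ Finset.range (n+2),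
            ψcoef ((j:ℤ) - (n:ℤ)) * (F (j+1)).derivative.eval z / ((j:ℂ)+1) := by
  intro n z
  rw [comap_norm_atTop] at hFfaber
  have hψ_affine : Tendsto (fun w => ψ w - (ψcoef 1 * w + ψcoef 0)) (cobounded ℂ) (𝓝 0) := by
    simpa [Finset.sum_range_succ, add_comm] using
      tendsto_laurent_mul_pow_sub_sum hlaurSum hlaur 0
  have hψ_div := tendsto_div_of_tendsto_sub_affine hψ_affine
  set G : ℂ[X] := C ((n + 1 : ℂ)⁻¹) * X * (F (n + 1)).derivative
    - ∑ j ∈ Finset.range (n + 2), C (ψcoef (j - n) / (j + 1)) * (F (j + 1)).derivative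
  have hG_eval : ∀ x, G.eval x = x * (F (n + 1)).derivative.eval x / (n + 1)
      - ∑ j ∈ Finset.range (n + 2), ψcoef (j - n) * (F (j + 1)).derivative.eval x / (j + 1) := by
    intro x
    simp only [G, eval_sub, eval_mul, eval_C, eval_X, eval_finsetSum]
    congr 1
    · ring
    · exact Finset.sum_congr rfl fun j _ => by ring
  have hψ'G : Tendsto (fun w => deriv ψ w * G.eval (ψ w)) (cobounded ℂ) (𝓝 0) := by
    refine (tendsto_mul_sub_sum_of_tendsto_mul_sub_pow
      (d := fun j w => deriv ψ w * (F (j + 1)).derivative.eval (ψ w) / (j + 1)) hψ_div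
      (fun j => tendsto_mul_deriv_eval_comp_sub hψdiff (hFfaber (j + 1)))
      (tendsto_laurent_mul_pow_sub_sum hlaurSum hlaur n)).congr fun w => ?_
    rw [hG_eval, mul_sub, Finset.mul_sum]
    congr 1
    · ring
    · exact Finset.sum_congr rfl fun j _ => by ring
  have hGψ : Tendsto (fun w => G.eval (ψ w)) (cobounded ℂ) (𝓝 0) := by
    have hψ' := tendsto_deriv_of_tendsto_sub_affine hψdiff hψ_affine
    refine (zero_div (ψcoef 1) ▸ hψ'G.div hψ' hψ1).congr' ?_
    filter_upwards [hψ'.eventually_ne hψ1] with w hw using mul_div_cancel_left₀ _ hw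
  have hG0 := G.eq_zero_of_tendsto_eval_nhds_zero
    (tendsto_cobounded_of_tendsto_div hψ1 hψ_div) hGψ
  simpa [hG0, sub_eq_zero] using (hG_eval z).symm

/-- The multiplication formula for derived Faber polynomials:
`z F'_{n+1}(z)/(n+1) = ∑_{j=0}^{n+1} ψ_{j−n} F'_{j+1}(z)/(j+1)`. -/
theorem faber_multiplication
    (ψ : ℂ → ℂ)
    (hψdiff : DifferentiableOn ℂ ψ {w : ℂ | 1 < ‖w‖})
    (hψinj : Set.InjOn ψ {w : ℂ | 1 < ‖w‖})
    -- Laurent expansion `ψ(w) = ψ₁ w + ψ₀ + ∑_{k≥1} ψ_{−k} w^{−k}`, `ψ₁ ≠ 0`,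
    -- absolutely convergent on `𝔻*`; we write `ψcoef m` for `ψ_m`
    (ψcoef : ℤ → ℂ) (hψ1 : ψcoef 1 ≠ 0)
    (hlaurSum : ∀ w : ℂ, 1 < ‖w‖ →
      Summable (fun k : ℕ => ‖ψcoef (-(k:ℤ)-1) * w^(-(k:ℤ)-1)‖))
    (hlaur : ∀ w : ℂ, 1 < ‖w‖ →
      ψ w = ψcoef 1 * w + ψcoef 0 + ∑' k : ℕ, ψcoef (-(k:ℤ)-1) * w^(-(k:ℤ)-1))
    -- the Faber polynomials of `ψ`
    (F : ℕ → Polynomial ℂ)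
    (hFdeg : ∀ n : ℕ, (F n).degree = (n : ℕ))
    (hFfaber : ∀ n : ℕ, Tendsto (fun w => (F n).eval (ψ w) - w^n)
        (comap (fun w : ℂ => ‖w‖) atTop) (nhds 0)) :
    ∀ n : ℕ, ∀ z : ℂ,
      z * (F (n+1)).derivative.eval z / ((n:ℂ)+1)
        = ∑ j ∈ Finset.range (n+2),
            ψcoef ((j:ℤ) - (n:ℤ)) * (F (j+1)).derivative.eval z / ((j:ℂ)+1) :=
  faber_multiplication_general ψ hψdiff ψcoef hψ1 hlaurSum hlaur F hFfaber
end
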